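/- Let s, t ∈ ℝ with 2 ≤ s ≤ 4 and 2 ≤ t ≤ 4. Then for all P, Q ∈ Γ_n with r ≤ p_i/q_i ≤ R for all i: (1/R^{s+1}) ((R+1)/2)^{s−t} (((4−s)R + s)/(tR + 4 − t)) ζ_t(P||Q) ≤ ζ_s(Q||P) ≤ (1/r^{s+1}) ((r+1)/2)^{s−t} (((4−s)r + s)/(tr + 4 − t)) ζ_t(P||Q). -/

import Mathlib

open Real Finset

/-- Relative information of type `s` (generalized Kullback-Leibler divergence). -/
noncomputable def Phi (n : ℕ) (s : ℝ) (p q : Fin n → ℝ) : ℝ :=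
  if s = 0 then ∑ i, q i * Real.log (q i / p i)
  else if s = 1 then ∑ i, p i * Real.log (p i / q i)
  else (s * (s - 1))⁻¹ * ((∑ i, (p i) ^ s * (q i) ^ (1 - s)) - 1)

/-- Unified relative JS and AG divergence of type `s`. -/
noncomputable def Omega (n : ℕ) (s : ℝ) (p q : Fin n → ℝ) : ℝ :=
  if s = 0 then ∑ i, p i * Real.log (2 * p i / (p i + q i))
  else if s = 1 then ∑ i, ((p i + q i) / 2) * Real.log ((p i + q i) / (2 * p i))
  else (s * (s - 1))⁻¹ * ((∑ i, p i * ((p i + q i) / (2 * p i)) ^ s) - 1)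

/-- Relative J-divergence of type `s`. -/
noncomputable def zeta (n : ℕ) (s : ℝ) (p q : Fin n → ℝ) : ℝ :=
  if s = 1 then ∑ i, (p i - q i) * Real.log ((p i + q i) / (2 * q i))
  else (s - 1)⁻¹ * ∑ i, (p i - q i) * ((p i + q i) / (2 * q i)) ^ (s - 1)

/-!
Both divergences are Csiszár `f`-divergences `D_f(P‖Q) = ∑ qᵢ f(pᵢ/qᵢ)` with generators vanishing
at `1`: `ζ_t(P‖Q)` has generator `ψ_t(x) = (t-1)⁻¹ (x-1) ((1+x)/2)^(t-1)`, and `ζ_s(Q‖P)` has the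
adjoint generator `φ_s(x) = x ψ_s(1/x)`, whose second derivative is `x⁻³ ψ_s''(1/x)`.
This equals `C(x) ψ_t''(x)`, where `C` is the bound function of the statement, and for
`s, t ∈ [2, 4]` the function `C` is decreasing on `(0, ∞)`. Hence `φ_s - C(R) ψ_t` and
`C(r) ψ_t - φ_s` are convex on `[r, R]`, and Jensen's inequality makes their `f`-divergences
nonnegative.
-/

theorem convexOn_Icc_of_hasDerivAt2 {f f' f'' : ℝ → ℝ} {r R : ℝ}
    (hf : ∀ x ∈ Set.Icc r R, HasDerivAt f (f' x) x)
    (hf' : ∀ x ∈ Set.Ioo r R, HasDerivAt f' (f'' x) x)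
    (hf'' : ∀ x ∈ Set.Ioo r R, 0 ≤ f'' x) : ConvexOn ℝ (Set.Icc r R) f := by
  refine convexOn_of_hasDerivWithinAt2_nonneg (f' := f') (f'' := f'') (convex_Icc r R)
    (fun x hx => (hf x hx).continuousAt.continuousWithinAt) ?_ ?_ ?_ <;> rw [interior_Icc]
  · exact fun x hx => (hf x (Set.Ioo_subset_Icc_self hx)).hasDerivWithinAt
  · exact fun x hx => (hf' x hx).hasDerivWithinAt
  · exact hf''

noncomputable def csiszarDiv {ι : Type*} [Fintype ι] (f : ℝ → ℝ) (p q : ι → ℝ) : ℝ :=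
  ∑ i, q i * f (p i / q i)

noncomputable def csiszarAdjoint (f : ℝ → ℝ) (x : ℝ) : ℝ := x * f x⁻¹

section CsiszarDiv

variable {ι : Type*} [Fintype ι] {p q : ι → ℝ}

theorem csiszarDiv_nonneg_of_convexOn {f : ℝ → ℝ} {D : Set ℝ} (hf : ConvexOn ℝ D f)
    (hf1 : f 1 = 0) (hq : ∀ i, 0 < q i) (hp1 : ∑ i, p i = 1) (hq1 : ∑ i, q i = 1)
    (hpq : ∀ i, p i / q i ∈ D) : 0 ≤ csiszarDiv f p q := by
  have hmean : ∑ i, q i • (p i / q i) = 1 := by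
    simpa only [smul_eq_mul, mul_div_cancel₀ _ (hq _).ne'] using hp1
  have hjensen := hf.map_sum_le (fun i _ => (hq i).le) hq1 (fun i _ => hpq i)
  rwa [hmean, hf1] at hjensen

theorem csiszarDiv_add (a b : ℝ) (f g : ℝ → ℝ) :
    csiszarDiv (fun x => a * f x + b * g x) p q = a * csiszarDiv f p q + b * csiszarDiv g p q := by
  simp only [csiszarDiv, Finset.mul_sum, ← Finset.sum_add_distrib]
  exact Finset.sum_congr rfl fun i _ => by ring

theorem mul_csiszarDiv_le_csiszarDiv_le_mul {f f' f'' g g' g'' : ℝ → ℝ} {r R m M : ℝ}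
    (hf : ∀ x ∈ Set.Icc r R, HasDerivAt f (f' x) x)
    (hf' : ∀ x ∈ Set.Ioo r R, HasDerivAt f' (f'' x) x)
    (hg : ∀ x ∈ Set.Icc r R, HasDerivAt g (g' x) x)
    (hg' : ∀ x ∈ Set.Ioo r R, HasDerivAt g' (g'' x) x) (hf1 : f 1 = 0) (hg1 : g 1 = 0)
    (hm : ∀ x ∈ Set.Ioo r R, m * g'' x ≤ f'' x) (hM : ∀ x ∈ Set.Ioo r R, f'' x ≤ M * g'' x)
    (hq : ∀ i, 0 < q i) (hp1 : ∑ i, p i = 1) (hq1 : ∑ i, q i = 1)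
    (hpq : ∀ i, p i / q i ∈ Set.Icc r R) :
    m * csiszarDiv g p q ≤ csiszarDiv f p q ∧ csiszarDiv f p q ≤ M * csiszarDiv g p q := by
  have combination_nonneg : ∀ a b : ℝ, (∀ x ∈ Set.Ioo r R, 0 ≤ a * f'' x + b * g'' x) →
      0 ≤ a * csiszarDiv f p q + b * csiszarDiv g p q := fun a b hab => by
    rw [← csiszarDiv_add]
    exact csiszarDiv_nonneg_of_convexOn (convexOn_Icc_of_hasDerivAt2
      (fun x hx => ((hf x hx).const_mul a).add ((hg x hx).const_mul b))
      (fun x hx => ((hf' x hx).const_mul a).add ((hg' x hx).const_mul b)) hab)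
      (by simp [hf1, hg1]) hq hp1 hq1 hpq
  constructor
  · linarith [combination_nonneg 1 (-m) fun x hx => by linarith [hm x hx]]
  · linarith [combination_nonneg (-1) M fun x hx => by linarith [hM x hx]]

theorem csiszarDiv_csiszarAdjoint (f : ℝ → ℝ) (hq : ∀ i, q i ≠ 0) :
    csiszarDiv (csiszarAdjoint f) p q = csiszarDiv f q p := by
  refine Finset.sum_congr rfl fun i _ => ?_
  rw [csiszarAdjoint, inv_div, ← mul_assoc, mul_div_cancel₀ _ (hq i)]

end CsiszarDiv

theorem hasDerivAt_csiszarAdjoint {f f' : ℝ → ℝ} {x : ℝ} (hx : x ≠ 0)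
    (hf : HasDerivAt f (f' x⁻¹) x⁻¹) :
    HasDerivAt (csiszarAdjoint f) (f x⁻¹ - x⁻¹ * f' x⁻¹) x := by
  have h := (hasDerivAt_id x).mul (hf.comp x (hasDerivAt_inv hx))
  refine h.congr_deriv ?_
  simp only [Function.comp_apply, id_eq]
  field_simp
  ring

theorem hasDerivAt_csiszarAdjoint_deriv {f f' f'' : ℝ → ℝ} {x : ℝ} (hx : x ≠ 0)
    (hf : HasDerivAt f (f' x⁻¹) x⁻¹) (hf' : HasDerivAt f' (f'' x⁻¹) x⁻¹) :
    HasDerivAt (fun y => f y⁻¹ - y⁻¹ * f' y⁻¹) (x⁻¹ ^ 3 * f'' x⁻¹) x := by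
  have hinv := hasDerivAt_inv hx
  have h := (hf.comp x hinv).sub (hinv.mul (hf'.comp x hinv))
  refine h.congr_deriv ?_
  simp only [Function.comp_apply]
  field_simp
  ring

noncomputable def zetaGen (t x : ℝ) : ℝ := (t - 1)⁻¹ * ((x - 1) * ((1 + x) / 2) ^ (t - 1))

noncomputable def zetaGenDeriv (t x : ℝ) : ℝ :=
  (t - 1)⁻¹ * (((1 + x) / 2) ^ (t - 2) * ((t * x + 2 - t) / 2))

noncomputable def zetaGenDeriv2 (t x : ℝ) : ℝ := ((1 + x) / 2) ^ (t - 3) * ((t * x + 4 - t) / 4)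

theorem zeta_eq_csiszarDiv {n : ℕ} {t : ℝ} (ht : t ≠ 1) (p : Fin n → ℝ) {q : Fin n → ℝ}
    (hq : ∀ i, q i ≠ 0) : zeta n t p q = csiszarDiv (zetaGen t) p q := by
  rw [zeta, if_neg ht, csiszarDiv, Finset.mul_sum]
  refine Finset.sum_congr rfl fun i _ => ?_
  have hqi := hq i
  rw [zetaGen, show (p i + q i) / (2 * q i) = (1 + p i / q i) / 2 by field_simp; ring,
    show p i - q i = q i * (p i / q i - 1) by field_simp]
  ring

theorem hasDerivAt_zetaGen {t x : ℝ} (ht : t ≠ 1) (hx : 0 < x) :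
    HasDerivAt (zetaGen t) (zetaGenDeriv t x) x := by
  have hu : 0 < (1 + x) / 2 := by positivity
  have h := (((hasDerivAt_id' x).sub_const 1).mul
    ((((hasDerivAt_id' x).const_add 1).div_const 2).rpow_const (p := t - 1)
      (Or.inl hu.ne'))).const_mul (t - 1)⁻¹
  refine h.congr_deriv ?_
  have hpow : ((1 + x) / 2) ^ (t - 1) = ((1 + x) / 2) ^ (t - 2) * ((1 + x) / 2) := by
    rw [← rpow_add_one hu.ne']; ring_nf
  rw [zetaGenDeriv, show t - 1 - 1 = t - 2 by ring, hpow]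
  field_simp [sub_ne_zero.mpr ht]
  ring

theorem hasDerivAt_zetaGenDeriv {t x : ℝ} (ht : t ≠ 1) (hx : 0 < x) :
    HasDerivAt (zetaGenDeriv t) (zetaGenDeriv2 t x) x := by
  have hu : 0 < (1 + x) / 2 := by positivity
  have h := (((((hasDerivAt_id' x).const_add 1).div_const 2).rpow_const (p := t - 2)
      (Or.inl hu.ne')).mul
    (((((hasDerivAt_id' x).const_mul t).add_const 2).sub_const t).div_const 2)).const_mul (t - 1)⁻¹
  refine h.congr_deriv ?_
  have hpow : ((1 + x) / 2) ^ (t - 2) = ((1 + x) / 2) ^ (t - 3) * ((1 + x) / 2) := by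
    rw [← rpow_add_one hu.ne']; ring_nf
  rw [zetaGenDeriv2, show t - 2 - 1 = t - 3 by ring, hpow]
  field_simp [sub_ne_zero.mpr ht]
  ring

noncomputable def zetaBound (s t x : ℝ) : ℝ :=
  1 / x ^ (s + 1) * ((x + 1) / 2) ^ (s - t) * (((4 - s) * x + s) / (t * x + 4 - t))

theorem zetaGenDeriv2_pos {t x : ℝ} (ht0 : 0 < t) (ht4 : t ≤ 4) (hx : 0 < x) :
    0 < zetaGenDeriv2 t x := by
  have : 0 < t * x + 4 - t := by nlinarith [mul_pos ht0 hx]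
  unfold zetaGenDeriv2
  positivity

theorem inv_pow_three_mul_zetaGenDeriv2_inv {s t x : ℝ} (hx : 0 < x) (htx : t * x + 4 - t ≠ 0) :
    x⁻¹ ^ 3 * zetaGenDeriv2 s x⁻¹ = zetaBound s t x * zetaGenDeriv2 t x := by
  have hu : 0 < (1 + x) / 2 := by positivity
  have hbase : (1 + x⁻¹) / 2 = ((1 + x) / 2) / x := by field_simp; ring
  have hsplit : ((1 + x) / 2) ^ (s - 3) = ((1 + x) / 2) ^ (s - t) * ((1 + x) / 2) ^ (t - 3) := by
    rw [← rpow_add hu]; ring_nf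
  have hxpow : x ^ (s + 1) = x ^ (s - 3) * x ^ 4 := by
    rw [← rpow_natCast, ← rpow_add hx]; ring_nf
  have : x ^ (s - 3) ≠ 0 := (rpow_pos_of_pos hx _).ne'
  rw [zetaGenDeriv2, zetaGenDeriv2, zetaBound, hbase, div_rpow hu.le hx.le, hsplit, hxpow,
    add_comm x 1]
  rw [mul_comm] at htx
  field_simp
  ring

theorem zetaBound_antitoneOn {s t : ℝ} (hs0 : 0 ≤ s) (hs4 : s ≤ 4) (ht0 : 0 < t) (ht4 : t ≤ 4)
    (hst : 4 ≤ s + t) : AntitoneOn (zetaBound s t) (Set.Ioi 0) := by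
  intro a (ha : 0 < a) b (hb : 0 < b) hab
  have hratio : ((4 - s) * b + s) / (t * b + 4 - t) ≤ ((4 - s) * a + s) / (t * a + 4 - t) := by
    rw [div_le_div_iff₀ (by nlinarith [mul_pos ht0 hb]) (by nlinarith [mul_pos ht0 ha])]
    nlinarith
  have hratio0 : 0 ≤ ((4 - s) * b + s) / (t * b + 4 - t) := by
    have : 0 < t * b + 4 - t := by nlinarith [mul_pos ht0 hb]
    have : 0 ≤ (4 - s) * b + s := by nlinarith
    positivity
  rcases le_total t s with hts | hst'
  · have hform : ∀ x, 0 < x → zetaBound s t x =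
        ((x + 1) / (2 * x)) ^ (s - t) * x ^ (-(t + 1)) * (((4 - s) * x + s) / (t * x + 4 - t)) := by
      intro x hx
      rw [zetaBound, show (x + 1) / (2 * x) = ((x + 1) / 2) / x by ring,
        div_rpow (by positivity) hx.le, rpow_neg hx.le, show s + 1 = (s - t) + (t + 1) by ring,
        rpow_add hx]
      field_simp
    rw [hform a ha, hform b hb]
    have hbase : (b + 1) / (2 * b) ≤ (a + 1) / (2 * a) := by
      rw [div_le_div_iff₀ (by positivity) (by positivity)]
      nlinarith
    gcongr ?_ * ?_ * ?_
    · exact rpow_le_rpow (by positivity) hbase (by linarith)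
    · exact rpow_le_rpow_of_nonpos ha hab (by linarith)
  · have hform : ∀ x, 0 < x → zetaBound s t x =
        (2 / (x + 1)) ^ (t - s) * x ^ (-(s + 1)) * (((4 - s) * x + s) / (t * x + 4 - t)) := by
      intro x hx
      rw [zetaBound, show s - t = -(t - s) by ring, rpow_neg (by positivity),
        ← inv_rpow (by positivity), inv_div, rpow_neg hx.le]
      ring
    rw [hform a ha, hform b hb]
    gcongr ?_ * ?_ * ?_
    · exact rpow_le_rpow (by positivity) (by gcongr) (by linarith)
    · exact rpow_le_rpow_of_nonpos ha hab (by linarith)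

theorem inv_pow_three_mul_zetaGenDeriv2_inv_mem_Icc {s t a b x : ℝ}
    (hanti : AntitoneOn (zetaBound s t) (Set.Ioi 0)) (ht0 : 0 < t) (ht4 : t ≤ 4) (ha : 0 < a)
    (hax : a ≤ x) (hxb : x ≤ b) :
    x⁻¹ ^ 3 * zetaGenDeriv2 s x⁻¹ ∈
      Set.Icc (zetaBound s t b * zetaGenDeriv2 t x) (zetaBound s t a * zetaGenDeriv2 t x) := by
  have hx : 0 < x := ha.trans_le hax
  have hψ := (zetaGenDeriv2_pos ht0 ht4 hx).le
  rw [inv_pow_three_mul_zetaGenDeriv2_inv hx (by nlinarith [mul_pos ht0 hx])]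
  exact ⟨mul_le_mul_of_nonneg_right (hanti hx (hx.trans_le hxb) hxb) hψ,
    mul_le_mul_of_nonneg_right (hanti ha hx hax) hψ⟩

theorem stmt_19_general (s t : ℝ) (hs2 : 2 ≤ s) (hs4 : s ≤ 4) (ht2 : 2 ≤ t) (ht4 : t ≤ 4)
    (n : ℕ) (p q : Fin n → ℝ)
    (hp : ∀ i, 0 < p i) (hq : ∀ i, 0 < q i)
    (hp1 : ∑ i, p i = 1) (hq1 : ∑ i, q i = 1)
    (r R : ℝ) (hr : 0 < r)
    (hbound : ∀ i, r ≤ p i / q i ∧ p i / q i ≤ R) :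
    (1 / R ^ (s + 1)) * ((R + 1) / 2) ^ (s - t) * (((4 - s) * R + s) / (t * R + 4 - t)) * zeta n t p q ≤ zeta n s q p ∧
      zeta n s q p ≤ (1 / r ^ (s + 1)) * ((r + 1) / 2) ^ (s - t) * (((4 - s) * r + s) / (t * r + 4 - t)) * zeta n t p q := by
  have hs1 : s ≠ 1 := by linarith
  have ht1 : t ≠ 1 := by linarith
  have hpos : ∀ x ∈ Set.Icc r R, 0 < x := fun x hx => hr.trans_le hx.1
  have hanti := zetaBound_antitoneOn (s := s) (t := t) (by linarith) hs4 (by linarith) ht4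
    (by linarith)
  have hderiv2 (x : ℝ) (hx : x ∈ Set.Ioo r R) :=
    inv_pow_three_mul_zetaGenDeriv2_inv_mem_Icc hanti (by linarith) ht4 hr hx.1.le hx.2.le
  rw [zeta_eq_csiszarDiv hs1 q fun i => (hp i).ne', zeta_eq_csiszarDiv ht1 p fun i => (hq i).ne',
    ← csiszarDiv_csiszarAdjoint _ fun i => (hq i).ne']
  have hinv : ∀ x ∈ Set.Icc r R, 0 < x⁻¹ := fun x hx => inv_pos.mpr (hpos x hx)
  exact mul_csiszarDiv_le_csiszarDiv_le_mul
    (fun x hx => hasDerivAt_csiszarAdjoint (hpos x hx).ne' (hasDerivAt_zetaGen hs1 (hinv x hx)))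
    (fun x hx => hasDerivAt_csiszarAdjoint_deriv (hpos x (Set.Ioo_subset_Icc_self hx)).ne'
      (hasDerivAt_zetaGen hs1 (hinv x (Set.Ioo_subset_Icc_self hx)))
      (hasDerivAt_zetaGenDeriv hs1 (hinv x (Set.Ioo_subset_Icc_self hx))))
    (fun x hx => hasDerivAt_zetaGen ht1 (hpos x hx))
    (fun x hx => hasDerivAt_zetaGenDeriv ht1 (hpos x (Set.Ioo_subset_Icc_self hx)))
    (by simp [csiszarAdjoint, zetaGen]) (by simp [zetaGen])
    (fun x hx => (hderiv2 x hx).1) (fun x hx => (hderiv2 x hx).2) hq hp1 hq1 hbound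

theorem stmt_19 (s t : ℝ) (hs2 : 2 ≤ s) (hs4 : s ≤ 4) (ht2 : 2 ≤ t) (ht4 : t ≤ 4)
    (n : ℕ) (hn : 2 ≤ n) (p q : Fin n → ℝ)
    (hp : ∀ i, 0 < p i) (hq : ∀ i, 0 < q i)
    (hp1 : ∑ i, p i = 1) (hq1 : ∑ i, q i = 1)
    (r R : ℝ) (hr : 0 < r) (hrR : r ≤ R)
    (hbound : ∀ i, r ≤ p i / q i ∧ p i / q i ≤ R) :
    (1 / R ^ (s + 1)) * ((R + 1) / 2) ^ (s - t) * (((4 - s) * R + s) / (t * R + 4 - t)) * zeta n t p q ≤ zeta n s q p ∧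
      zeta n s q p ≤ (1 / r ^ (s + 1)) * ((r + 1) / 2) ^ (s - t) * (((4 - s) * r + s) / (t * r + 4 - t)) * zeta n t p q :=
  stmt_19_general s t hs2 hs4 ht2 ht4 n p q hp hq hp1 hq1 r R hr hbound
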